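/- Let d ≥ 1, let n = 2d, and let Δ be a well-distributed f-simplicial complex on [n]. Then every subset U of [n] with |U| > d contains some facet of Δ; consequently, no subset of [n] of cardinality greater than d is a minimal nonface of Δ^c. -/

import Mathlib

open Finset

/-- `Δ`, given as the finset of its faces, is a simplicial complex on the vertex
set `Fin n`: a nonempty collection of subsets closed under taking subsets. -/
def IsComplex {n : ℕ} (Δ : Finset (Finset (Fin n))) : Prop :=
  Δ.Nonempty ∧ ∀ A ∈ Δ, ∀ B ⊆ A, B ∈ Δ

/-- The facets (maximal faces) of `Δ`. -/
def facets {n : ℕ} (Δ : Finset (Finset (Fin n))) : Finset (Finset (Fin n)) :=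
  Δ.filter fun F => ∀ G ∈ Δ, F ⊆ G → F = G

/-- The simplicial complex generated by a family `𝔉`: all subsets of members of `𝔉`. -/
def generated {n : ℕ} (𝔉 : Finset (Finset (Fin n))) : Finset (Finset (Fin n)) :=
  univ.filter fun A => ∃ F ∈ 𝔉, A ⊆ F

/-- The Newton complement dual `Δ^c`: the complex generated by the complements
of the facets of `Δ`. -/
def cdual {n : ℕ} (Δ : Finset (Finset (Fin n))) : Finset (Finset (Fin n)) :=
  generated ((facets Δ).image fun F => Fᶜ)

/-- The nonface complex of `Δ`: all subsets of `[n]` containing no facet of `Δ`. -/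
def nonfaceComplex {n : ℕ} (Δ : Finset (Finset (Fin n))) : Finset (Finset (Fin n)) :=
  univ.filter fun A => ∀ F ∈ facets Δ, ¬ F ⊆ A

/-- `Δ` is an `f`-simplicial complex: for every `k`, `Δ` and its nonface complex
have the same number of `k`-element members (the same `f`-vector). -/
def IsFComplex {n : ℕ} (Δ : Finset (Finset (Fin n))) : Prop :=
  ∀ k : ℕ, (Δ.filter fun A => A.card = k).card =
    ((nonfaceComplex Δ).filter fun A => A.card = k).card

/-- `Δ` is pure `(d-1)`-dimensional: every facet has exactly `d` elements. -/
def PureDim {n : ℕ} (d : ℕ) (Δ : Finset (Finset (Fin n))) : Prop :=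
  ∀ F ∈ facets Δ, F.card = d

/-- The minimal nonfaces of `Δ`: sets that are not faces but all of whose proper
subsets are faces. -/
def minNonfaces {n : ℕ} (Δ : Finset (Finset (Fin n))) : Finset (Finset (Fin n)) :=
  univ.filter fun A => A ∉ Δ ∧ ∀ B ⊂ A, B ∈ Δ

/-- The Alexander dual `Δ^∨`: the complex whose facets are the complements of the
minimal nonfaces of `Δ`. -/
def adual {n : ℕ} (Δ : Finset (Finset (Fin n))) : Finset (Finset (Fin n)) :=
  generated ((minNonfaces Δ).image fun F => Fᶜ)

/-- The homogeneous complement `Δ'` (in degree `e`): the complex generated by the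
`e`-element subsets of `[n]` that are not facets of `Δ`. -/
def hcompl {n : ℕ} (e : ℕ) (Δ : Finset (Finset (Fin n))) : Finset (Finset (Fin n)) :=
  generated (univ.filter fun A : Finset (Fin n) => A.card = e ∧ A ∉ facets Δ)

/-! Faces of a pure `(d-1)`-dimensional complex have at most `d` elements, so the `f`-vector
equality leaves no room for a nonface-complex member `U` with `|U| > d`: such `U` contains a
facet `F` of `Δ`. If `U` were a minimal nonface of `Δ^c`, then `F ⊂ U` would be a face of `Δ^c`
with `d = n - d` elements, the largest size a face of `Δ^c` can have, hence a facet of `Δ^c`,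
contradicting `F(Δ) ∩ F(Δ^c) = ∅`. -/

section

variable {n d : ℕ} {Δ : Finset (Finset (Fin n))} {A : Finset (Fin n)}

lemma exists_mem_facets_superset (hA : A ∈ Δ) : ∃ F ∈ facets Δ, A ⊆ F := by
  obtain ⟨F, hF, hmax⟩ := (Δ.filter fun B => A ⊆ B).exists_maximal ⟨A, by simp [hA]⟩
  rw [mem_filter] at hF
  refine ⟨F, mem_filter.2 ⟨hF.1, fun G hG hFG => ?_⟩, hF.2⟩
  exact le_antisymm hFG (hmax (mem_filter.2 ⟨hG, hF.2.trans hFG⟩) hFG)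

lemma mem_facets_of_card_eq (hbound : ∀ B ∈ Δ, B.card ≤ d) (hA : A ∈ Δ) (hcard : A.card = d) :
    A ∈ facets Δ :=
  mem_filter.2 ⟨hA, fun B hB hAB => eq_of_subset_of_card_le hAB (hcard ▸ hbound B hB)⟩

lemma PureDim.card_le (hpure : PureDim d Δ) (hA : A ∈ Δ) : A.card ≤ d := by
  obtain ⟨F, hF, hAF⟩ := exists_mem_facets_superset hA
  exact (card_le_card hAF).trans_eq (hpure F hF)

lemma PureDim.card_le_of_mem_cdual (hpure : PureDim d Δ) (hA : A ∈ cdual Δ) :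
    A.card ≤ n - d := by
  obtain ⟨-, _, hGc, hAG⟩ := mem_filter.1 hA
  obtain ⟨G, hG, rfl⟩ := mem_image.1 hGc
  calc A.card ≤ Gᶜ.card := card_le_card hAG
    _ = n - d := by rw [card_compl, hpure G hG, Fintype.card_fin]

lemma IsFComplex.exists_facet_subset (hf : IsFComplex Δ) {U : Finset (Fin n)}
    (hU : ∀ A ∈ Δ, A.card ≠ U.card) : ∃ F ∈ facets Δ, F ⊆ U := by
  by_contra! h
  have hnone : (Δ.filter fun A => A.card = U.card) = ∅ :=
    filter_eq_empty_iff.2 fun A hA => hU A hA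
  have hU_mem : U ∈ (nonfaceComplex Δ).filter fun A => A.card = U.card :=
    mem_filter.2 ⟨mem_filter.2 ⟨mem_univ U, h⟩, rfl⟩
  have hcount := hf U.card
  rw [hnone, card_empty] at hcount
  exact (card_pos.2 ⟨U, hU_mem⟩).ne hcount

end

theorem stmt10_general {d n : ℕ} (hn : n = 2 * d)
    (Δ : Finset (Finset (Fin n))) (hpure : PureDim d Δ)
    (hf : IsFComplex Δ) (hwd : facets Δ ∩ facets (cdual Δ) = ∅) :
    (∀ U : Finset (Fin n), d < U.card → ∃ F ∈ facets Δ, F ⊆ U) ∧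
      ∀ U : Finset (Fin n), d < U.card → U ∉ minNonfaces (cdual Δ) := by
  have hcover : ∀ U : Finset (Fin n), d < U.card → ∃ F ∈ facets Δ, F ⊆ U := fun U hU =>
    hf.exists_facet_subset fun A hA => ((hpure.card_le hA).trans_lt hU).ne
  refine ⟨hcover, fun U hU hmin => ?_⟩
  obtain ⟨F, hF, hFU⟩ := hcover U hU
  have hFd : F.card = d := hpure F hF
  have hFU' : F ⊂ U := hFU.ssubset_of_ne (by rintro rfl; omega)
  have hF_cdual : F ∈ cdual Δ := (mem_filter.1 hmin).2.2 F hFU'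
  have hF_facet : F ∈ facets (cdual Δ) :=
    mem_facets_of_card_eq (fun B hB => (hpure.card_le_of_mem_cdual hB).trans (by omega))
      hF_cdual hFd
  simpa [hwd] using mem_inter.2 ⟨hF, hF_facet⟩

/-- for a well-distributed `f`-simplicial complex `Δ` (`n = 2d`, pure
`(d-1)`-dimensional, `F(Δ) ∩ F(Δ^c) = ∅`), every subset `U` of `[n]` with `|U| > d`
contains a facet of `Δ`; consequently no such `U` is a minimal nonface of `Δ^c`. -/
theorem stmt10 {d n : ℕ} (hd : 1 ≤ d) (hn : n = 2 * d)
    (Δ : Finset (Finset (Fin n))) (hΔ : IsComplex Δ) (hpure : PureDim d Δ)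
    (hf : IsFComplex Δ) (hwd : facets Δ ∩ facets (cdual Δ) = ∅) :
    (∀ U : Finset (Fin n), d < U.card → ∃ F ∈ facets Δ, F ⊆ U) ∧
      ∀ U : Finset (Fin n), d < U.card → U ∉ minNonfaces (cdual Δ) :=
  stmt10_general hn Δ hpure hf hwd
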